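/- arXiv:1205.6169 — 4 statements merged into one kernel-verified Lean document; each statement's English description precedes it below -/
import Mathlib

section
/- Let S be a semigroup that is a disjoint union of subsemigroups N_a (a ∈ A, A finite), each N_a being a copy of the free monogenic semigroup generated by a (so every element of S is a positive power of exactly one generator a ∈ A, and distinct powers of a are distinct). Fix a ∈ A and q ∈ ℕ with q ≥ 1. Then the set of elements x ∈ S such that a^p * x = a^(p+q) for some p ≥ 1 is finite. -/
/-- `spow a n` is the `n`-th power of `a` in a semigroup, for `n ≥ 1`
(with the junk value `a` at `n = 0`). -/
def spow {S : Type*} [Semigroup S] (a : S) : ℕ → S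
  | 0 => a
  | 1 => a
  | (n + 2) => spow a (n + 1) * a

/-- The subsemigroup (as a set) generated by `a`: all positive powers of `a`. -/
def Nblock {S : Type*} [Semigroup S] (a : S) : Set S :=
  {x | ∃ i : ℕ, 1 ≤ i ∧ x = spow a i}

lemma spow_succ' {S : Type*} [Semigroup S] (a : S) {m : ℕ} (hm : 1 ≤ m) :
    spow a (m + 1) = spow a m * a := by
  obtain ⟨m, rfl⟩ : ∃ k, m = k + 1 := ⟨m - 1, by omega⟩
  rfl

lemma spow_add' {S : Type*} [Semigroup S] (a : S) {m n : ℕ} (hm : 1 ≤ m) (hn : 1 ≤ n) :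
    spow a (m + n) = spow a m * spow a n := by
  induction n with
  | zero => omega
  | succ n ih =>
    rcases Nat.lt_or_ge n 1 with h | h
    · obtain rfl : n = 0 := by omega
      exact spow_succ' a hm
    · have e : m + (n + 1) = (m + n) + 1 := by ring
      rw [e, spow_succ' a (by omega), ih h, spow_succ' a h, mul_assoc]

theorem stmt0 {S : Type*} [Semigroup S] {A : Type*} [Finite A] (gen : A → S)
    (hcover : ∀ x : S, ∃ a : A, x ∈ Nblock (gen a))
    (hfree : ∀ (a b : A) (i j : ℕ), 1 ≤ i → 1 ≤ j →
      spow (gen a) i = spow (gen b) j → a = b ∧ i = j)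
    (a : A) (q : ℕ) (hq : 1 ≤ q) :
    {x : S | ∃ p : ℕ, 1 ≤ p ∧ spow (gen a) p * x = spow (gen a) (p + q)}.Finite := by
  classical
  set g := gen a with hg
  set X := {x : S | ∃ p : ℕ, 1 ≤ p ∧ spow g p * x = spow g (p + q)} with hX
  -- monotonicity of witnesses
  have mono : ∀ (x : S) (p : ℕ), 1 ≤ p → spow g p * x = spow g (p + q) →
      ∀ t : ℕ, spow g (p + t) * x = spow g (p + t + q) := by
    intro x p hp hx t
    cases t with
    | zero => simpa using hx
    | succ t =>
      have e : p + (t + 1) = (t + 1) + p := by ring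
      rw [e, spow_add' g (by omega) hp, mul_assoc, hx,
        ← spow_add' g (by omega) (by omega)]
      congr 1
      ring
  have hsub : X ⊆ ⋃ b : A, {x | x ∈ X ∧ x ∈ Nblock (gen b)} := by
    intro x hx
    obtain ⟨b, hb⟩ := hcover x
    exact Set.mem_iUnion.2 ⟨b, hx, hb⟩
  refine Set.Finite.subset (Set.finite_iUnion fun b => ?_) hsub
  refine Set.Subsingleton.finite ?_
  rintro x ⟨⟨p, hp, hpx⟩, ⟨j, hj, rfl⟩⟩ y ⟨⟨p', hp', hpy⟩, ⟨k, hk, rfl⟩⟩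
  set b' := gen b with hb'
  set P := p + p' with hP
  have hP1 : 1 ≤ P := by omega
  have hPx : spow g P * spow b' j = spow g (P + q) := mono _ p hp hpx p'
  have hPy : spow g P * spow b' k = spow g (P + q) := by
    have := mono _ p' hp' hpy p
    have e : p' + p = P := by omega
    rwa [e] at this
  -- core contradiction: no two distinct exponents can both be solutions
  have contra : ∀ j k : ℕ, 1 ≤ j → j < k →
      spow g P * spow b' j = spow g (P + q) →
      spow g P * spow b' k = spow g (P + q) → False := by
    intro j k hj hjk hxj hxk
    set d := k - j with hd
    have hd1 : 1 ≤ d := by omega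
    have hz : spow g (P + q) * spow b' d = spow g (P + q) := by
      calc spow g (P + q) * spow b' d
          = (spow g P * spow b' j) * spow b' d := by rw [hxj]
        _ = spow g P * (spow b' j * spow b' d) := mul_assoc _ _ _
        _ = spow g P * spow b' k := by
            rw [← spow_add' b' hj hd1]
            congr 2
            omega
        _ = spow g (P + q) := hxk
    have claim1 : ∀ m : ℕ, spow g P * spow b' (j + m * d) = spow g (P + q) := by
      intro m
      induction m with
      | zero => simpa using hxj
      | succ m ih =>
        have e : j + (m + 1) * d = (j + m * d) + d := by ring
        rw [e, spow_add' b' (by omega) hd1, ← mul_assoc, ih, hz]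
    have claim2 : ∀ m : ℕ, 1 ≤ m →
        spow g P * spow b' (m * j) = spow g (P + m * q) := by
      intro m hm
      induction m with
      | zero => omega
      | succ m ih =>
        rcases Nat.lt_or_ge m 1 with h | h
        · obtain rfl : m = 0 := by omega
          simpa using hxj
        · have hmj : 1 ≤ m * j := Nat.one_le_iff_ne_zero.2 (by positivity)
          have hmq : 1 ≤ m * q := Nat.one_le_iff_ne_zero.2 (by positivity)
          have e : (m + 1) * j = m * j + j := by ring
          rw [e, spow_add' b' hmj hj, ← mul_assoc, ih h]
          have e2 : P + m * q = m * q + P := by ring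
          rw [e2, spow_add' g hmq hP1, mul_assoc, hxj,
            ← spow_add' g hmq (by omega)]
          congr 1
          ring
    have h1 := claim1 j
    have h2 := claim2 (1 + d) (by omega)
    have e : (1 + d) * j = j + j * d := by ring
    rw [e] at h2
    have h3 : spow g (P + q) = spow g (P + (1 + d) * q) := h1.symm.trans h2
    have h4 := (hfree a a _ _ (by omega) (by omega) h3).2
    have h5 : (1 + d) * q = q := by omega
    have h6 := Nat.eq_of_mul_eq_mul_right (show 0 < q by omega)
      (h5.trans (one_mul q).symm)
    omega
  rcases lt_trichotomy j k with h | h | h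
  · exact absurd hPy (by intro hc; exact contra j k hj h hPx hc)
  · rw [h]
  · exact absurd hPx (by intro hc; exact contra k j hk h hPy hc)
end

section
/- Let R_i = { p_i + t·q_i : t ≥ 0 } for i = 1, ..., n be finitely many arithmetic progressions of positive integers (p_i, q_i ≥ 1). If there exists a positive integer p such that every integer m ≥ p belongs to ⋃ R_i, then every integer m ≥ max{p_1, ..., p_n} belongs to ⋃ R_i. -/
theorem stmt8 (n : ℕ) (hn : 1 ≤ n) (p q : Fin n → ℕ)
    (hp : ∀ i, 1 ≤ p i) (hq : ∀ i, 1 ≤ q i)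
    (P : ℕ) (hP : 1 ≤ P)
    (hcov : ∀ m : ℕ, P ≤ m → ∃ (i : Fin n) (t : ℕ), m = p i + t * q i) :
    ∀ m : ℕ, Finset.univ.sup p ≤ m → ∃ (i : Fin n) (t : ℕ), m = p i + t * q i := by
  intro m hm
  set Q := ∏ i, q i with hQ
  have hQ1 : 1 ≤ Q := Finset.one_le_prod' (fun i _ => hq i)
  have hbig : P ≤ m + P * Q := by
    calc P = P * 1 := (mul_one P).symm
    _ ≤ P * Q := Nat.mul_le_mul_left P hQ1
    _ ≤ m + P * Q := Nat.le_add_left _ _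
  obtain ⟨i, t, hit⟩ := hcov (m + P * Q) hbig
  have hpi : p i ≤ m := le_trans (Finset.le_sup (Finset.mem_univ i)) hm
  have hdvdQ : q i ∣ Q := Finset.dvd_prod_of_mem q (Finset.mem_univ i)
  have hdvd : q i ∣ m - p i := by
    have h1 : m - p i + P * Q = t * q i := by omega
    have : q i ∣ m - p i + P * Q := h1 ▸ ⟨t, (Nat.mul_comm t (q i))⟩
    exact (Nat.dvd_add_right (Dvd.dvd.mul_left hdvdQ P)).mp (by rwa [Nat.add_comm] at this)
  obtain ⟨s, hs⟩ := hdvd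
  exact ⟨i, s, by rw [Nat.mul_comm]; omega⟩
end

section
/- Let S be a semigroup that is a finite disjoint union of free monogenic subsemigroups N_a = ⟨a⟩ (a ∈ A), and let ρ be the right congruence defined by (x,y) ∈ ρ iff for all z ∈ S¹ there is a ∈ A with x·z, y·z ∈ N_a. Then ρ has finitely many equivalence classes. -/
/-- The relation ρ: `x ρ y` iff for every `z` in `S¹` (here `WithOne S`, i.e. `S` with an
identity adjoined) there is a block `N_a` containing both `x·z` and `y·z`. -/
def rho {S : Type*} [Semigroup S] {A : Type*} (gen : A → S) (x y : S) : Prop :=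
  ∀ z : WithOne S, ∃ a : A,
    (↑x * z) ∈ ((fun s : S => (s : WithOne S)) '' Nblock (gen a)) ∧
    (↑y * z) ∈ ((fun s : S => (s : WithOne S)) '' Nblock (gen a))

/-!
Write `block m` for the index of the block `N_a` containing `m ∈ S¹`. Then `x ρ y` says exactly
that `z ↦ block (x z)` and `z ↦ block (y z)` agree on `S¹`, so it suffices to show that for each
`a` the map `k ↦ (z ↦ block (aᵏ z))` is eventually periodic, with a period independent of `z`.

Two cancellation-like facts drive the argument: `w bᴸ = bᴷ` and `bᴸ w = bᴷ` force `L ≤ K`.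
(Otherwise `w` lowers large exponents of `b`, and along a suitable progression of `k` the elements
`b^(k(L-K)) wᵏ` absorb one another from the left; two of them lie in one block, which a free
monogenic semigroup forbids.) Consequently, along a row `V ↦ block (y cⱽ)` a repeated
block recurs with the same gap at every later occurrence, so every row is eventually periodic.
Along an orbit `k ↦ aᵏ z`, two of the first `|A| + 2` terms share a block: either the orbit cycles,
or `aˢ bᵉ = b^(e+δ)` with `δ > 0`, and from then on the orbit runs through the finitely many rows
`V ↦ aʲ bⱽ` with `j < s`, whose common period gives one that is uniform in `z`.
-/

section Periodicity

variable {α : Type*}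

theorem exists_lt_le_add_card_map_eq [Finite α] (f : ℕ → α) (b : ℕ) :
    ∃ u v, b ≤ u ∧ u < v ∧ v ≤ b + Nat.card α ∧ f u = f v := by
  have := Fintype.ofFinite α
  obtain ⟨u, hu, v, hv, hne, hf⟩ := Finset.exists_ne_map_eq_of_card_lt_of_maps_to
    (s := Finset.Icc b (b + Nat.card α)) (t := (Finset.univ : Finset α))
    (by simp [Nat.card_eq_fintype_card]; omega) fun _ _ => Finset.mem_univ _
  rw [Finset.mem_Icc] at hu hv
  rcases hne.lt_or_gt with h | h
  · exact ⟨u, v, hu.1, h, hv.2, hf⟩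
  · exact ⟨v, u, hv.1, h, hu.2, hf.symm⟩

theorem imp_add_mul_of_imp_add {p : ℕ → Prop} {N T : ℕ} (h : ∀ m ≥ N, p m → p (m + T))
    (k : ℕ) : ∀ m ≥ N, p m → p (m + k * T) := by
  induction k with
  | zero => simp
  | succ k ih =>
    intro m hm hp
    rw [add_one_mul, ← add_assoc]
    exact h _ (by omega) (ih m hm hp)

theorem eq_add_mul_of_eq_add {f : ℕ → α} {N T : ℕ} (h : ∀ m ≥ N, f (m + T) = f m) (k : ℕ) :
    ∀ m ≥ N, f (m + k * T) = f m := fun m hm =>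
  imp_add_mul_of_imp_add (p := fun n => f n = f m) (fun n hn hp => (h n hn).trans hp) k m hm rfl

theorem exists_common_period {ι : Type*} [Finite ι] {p : ι → ℕ → Prop}
    (h : ∀ i, ∃ N T, 0 < T ∧ ∀ m ≥ N, p i m → p i (m + T)) :
    ∃ N T, 0 < T ∧ ∀ i, ∀ m ≥ N, ∀ k, p i m → p i (m + k * T) := by
  have := Fintype.ofFinite ι
  choose N T hT hp using h
  refine ⟨Finset.univ.sup N, ∏ i, T i, Finset.prod_pos fun i _ => hT i, fun i m hm k => ?_⟩
  obtain ⟨c, hc⟩ := Finset.dvd_prod_of_mem T (Finset.mem_univ i)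
  rw [hc, mul_comm (T i), ← mul_assoc]
  exact imp_add_mul_of_imp_add (hp i) (k * c) m ((Finset.le_sup (Finset.mem_univ i)).trans hm)

theorem exists_period_of_repeats_propagate [Finite α] {G : ℕ → α}
    (h : ∀ V V' W, V < V' → V ≤ W → G V' = G V → G W = G V → G (W + (V' - V)) = G V) :
    ∃ N T, 0 < T ∧ ∀ m ≥ N, G (m + T) = G m := by
  have hvalue : ∀ β, ∃ N T, 0 < T ∧ ∀ m ≥ N, G m = β → G (m + T) = β := by
    intro β
    by_cases hrep : ∃ V V', V < V' ∧ G V = β ∧ G V' = β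
    · obtain ⟨V, V', hlt, rfl, hV'⟩ := hrep
      exact ⟨V, V' - V, by omega, fun W hW hGW => h V V' W hlt hW hV' hGW⟩
    · by_cases hocc : ∃ W₀, G W₀ = β
      · obtain ⟨W₀, hW₀⟩ := hocc
        exact ⟨W₀ + 1, 1, one_pos, fun W hW hGW => (hrep ⟨W₀, W, by omega, hW₀, hGW⟩).elim⟩
      · exact ⟨0, 1, one_pos, fun W _ hGW => (hocc ⟨W, hGW⟩).elim⟩
  obtain ⟨N, T, hT, hper⟩ := exists_common_period hvalue
  exact ⟨N, T, hT, fun m hm => by simpa using hper (G m) m hm 1 rfl⟩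

theorem finite_range_of_period {f : ℕ → α} {N T : ℕ} (hT : 0 < T)
    (h : ∀ m ≥ N, f (m + T) = f m) : (Set.range f).Finite := by
  refine ((Set.finite_lt_nat (N + T)).image f).subset ?_
  rintro _ ⟨m, rfl⟩
  induction m using Nat.strong_induction_on with
  | _ m ih =>
    by_cases hm : m < N + T
    · exact ⟨m, hm, rfl⟩
    · obtain ⟨n, rfl⟩ : ∃ n, m = n + T := ⟨m - T, by omega⟩
      rw [h n (by omega)]
      exact ih n (by omega)

end Periodicity

section Monoid

variable {M : Type*} [Monoid M] {x y : M}

theorem mul_pow_eq_pow_add_of_le {e δ n : ℕ} (h : x * y ^ e = y ^ (e + δ)) (hn : e ≤ n) :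
    x * y ^ n = y ^ (n + δ) := by
  obtain ⟨k, rfl⟩ := Nat.exists_eq_add_of_le hn
  rw [pow_add, ← mul_assoc, h, ← pow_add, add_right_comm]

theorem pow_mul_pow_add_mul {N i j : ℕ} (h : ∀ n ≥ N, x * y ^ (n + i) = y ^ (n + j)) (k : ℕ) :
    ∀ n ≥ N, x ^ k * y ^ (n + k * i) = y ^ (n + k * j) := by
  induction k with
  | zero => simp
  | succ k ih =>
    intro n hn
    rw [pow_succ, mul_assoc, add_one_mul, ← add_assoc, h _ (by omega), add_right_comm,
      ih _ (by omega), add_one_mul, add_assoc, add_comm j]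

theorem pow_add_mul_mul_pow {N i j : ℕ} (h : ∀ n ≥ N, y ^ (n + i) * x = y ^ (n + j)) (k : ℕ) :
    ∀ n ≥ N, y ^ (n + k * i) * x ^ k = y ^ (n + k * j) := by
  intro n hn
  apply MulOpposite.op_injective
  simpa using pow_mul_pow_add_mul (x := MulOpposite.op x) (y := MulOpposite.op y)
    (fun n hn => by simpa using congrArg MulOpposite.op (h n hn)) k n hn

end Monoid

theorem WithOne.mul_eq_one_iff {S : Type*} [Mul S] {x y : WithOne S} :
    x * y = 1 ↔ x = 1 ∧ y = 1 := by
  induction x <;> induction y <;> simp [← WithOne.coe_mul]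

section FreeMonogenicUnion

variable {S : Type*} [Semigroup S] {A : Type*}

theorem coe_spow (x : S) : ∀ {n : ℕ}, 0 < n → ((spow x n : S) : WithOne S) = (x : WithOne S) ^ n
  | 1, _ => by simp [spow]
  | n + 2, _ => by rw [spow, WithOne.coe_mul, coe_spow x n.succ_pos, ← pow_succ]

theorem coe_pow_ne_one (x : S) {n : ℕ} (hn : 0 < n) : (x : WithOne S) ^ n ≠ 1 := by
  rw [← coe_spow x hn]
  exact WithOne.coe_ne_one

theorem mem_image_coe_Nblock_iff {m : WithOne S} {x : S} :
    m ∈ (fun s : S => (s : WithOne S)) '' Nblock x ↔ ∃ i, 0 < i ∧ m = (x : WithOne S) ^ i := by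
  constructor
  · rintro ⟨_, ⟨i, hi, rfl⟩, rfl⟩
    exact ⟨i, hi, coe_spow x hi⟩
  · rintro ⟨i, hi, rfl⟩
    exact ⟨spow x i, ⟨i, hi, rfl⟩, coe_spow x hi⟩

structure IsFreeMonogenicUnion (gen : A → S) : Prop where
  exists_eq_pow (x : S) : ∃ a i, 0 < i ∧ (x : WithOne S) = (gen a : WithOne S) ^ i
  eq_of_pow_eq {a b : A} {i j : ℕ} (hi : 0 < i) (hj : 0 < j)
    (h : (gen a : WithOne S) ^ i = (gen b : WithOne S) ^ j) : a = b ∧ i = j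

open Classical in
noncomputable def block (gen : A → S) (m : WithOne S) : Option A :=
  if h : ∃ a i, 0 < i ∧ m = (gen a : WithOne S) ^ i then some h.choose else none

theorem block_one (gen : A → S) : block gen 1 = none :=
  dif_neg fun ⟨a, _, hi, h⟩ => coe_pow_ne_one (gen a) hi h.symm

noncomputable def signature (gen : A → S) (x : S) : WithOne S → Option A :=
  fun z => block gen (x * z)

namespace IsFreeMonogenicUnion

variable {gen : A → S}

theorem of_spow (hcover : ∀ x : S, ∃ a : A, x ∈ Nblock (gen a))
    (hfree : ∀ (a b : A) (i j : ℕ), 1 ≤ i → 1 ≤ j →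
      spow (gen a) i = spow (gen b) j → a = b ∧ i = j) :
    IsFreeMonogenicUnion gen where
  exists_eq_pow x := by
    obtain ⟨a, i, hi, rfl⟩ := hcover x
    exact ⟨a, i, hi, coe_spow _ hi⟩
  eq_of_pow_eq hi hj h :=
    hfree _ _ _ _ hi hj (WithOne.coe_injective (by rw [coe_spow _ hi, coe_spow _ hj, h]))

theorem exists_eq_pow_of_ne_one (hS : IsFreeMonogenicUnion gen) {m : WithOne S} (hm : m ≠ 1) :
    ∃ a i, 0 < i ∧ m = (gen a : WithOne S) ^ i := by
  obtain ⟨x, rfl⟩ := WithOne.ne_one_iff_exists.mp hm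
  exact hS.exists_eq_pow x

theorem block_eq_some_iff (hS : IsFreeMonogenicUnion gen) {m : WithOne S} {a : A} :
    block gen m = some a ↔ ∃ i, 0 < i ∧ m = (gen a : WithOne S) ^ i := by
  unfold block
  split_ifs with h
  · obtain ⟨j, hj, hm⟩ := h.choose_spec
    refine ⟨fun ha => ⟨j, hj, Option.some_injective _ ha ▸ hm⟩, fun ⟨i, hi, hm'⟩ => ?_⟩
    rw [(hS.eq_of_pow_eq hj hi (hm.symm.trans hm')).1]
  · exact ⟨nofun, fun ⟨i, hi, hm⟩ => (h ⟨a, i, hi, hm⟩).elim⟩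

theorem block_pow (hS : IsFreeMonogenicUnion gen) (a : A) {i : ℕ} (hi : 0 < i) :
    block gen ((gen a : WithOne S) ^ i) = some a :=
  hS.block_eq_some_iff.mpr ⟨i, hi, rfl⟩

theorem mul_ne_of_block_eq (hS : IsFreeMonogenicUnion gen) {x y : WithOne S} (hy : y ≠ 1)
    (h : block gen x = block gen y) : x * y ≠ y ∧ y * x ≠ y := by
  obtain ⟨b, j, hj, rfl⟩ := hS.exists_eq_pow_of_ne_one hy
  obtain ⟨i, hi, rfl⟩ := hS.block_eq_some_iff.mp (h.trans (hS.block_pow b hj))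
  rw [← pow_add, ← pow_add]
  constructor <;> intro h' <;> have := (hS.eq_of_pow_eq (by omega) hj h').2 <;> omega

theorem rho_iff_signature_eq (hS : IsFreeMonogenicUnion gen) {x y : S} :
    rho gen x y ↔ signature gen x = signature gen y := by
  simp only [rho, mem_image_coe_Nblock_iff, ← hS.block_eq_some_iff, funext_iff, signature]
  refine forall_congr' fun z => ⟨fun ⟨a, hx, hy⟩ => hx.trans hy.symm, fun h => ?_⟩
  obtain ⟨a, i, hi, hxz⟩ := hS.exists_eq_pow_of_ne_one (m := x * z) fun h1 =>
    WithOne.coe_ne_one (WithOne.mul_eq_one_iff.mp h1).1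
  rw [hxz, hS.block_pow a hi] at h ⊢
  exact ⟨a, rfl, h.symm⟩

variable [Finite A]

theorem le_of_mul_pow_eq_pow (hS : IsFreeMonogenicUnion gen) {w : WithOne S} {b : A}
    {L K : ℕ} (h : w * (gen b : WithOne S) ^ L = (gen b : WithOne S) ^ K) : L ≤ K := by
  by_contra! hKL
  obtain ⟨e, rfl⟩ : ∃ e, L = K + e := ⟨L - K, by omega⟩
  have he : 0 < e := by omega
  have hshift := pow_mul_pow_add_mul (x := w) (y := (gen b : WithOne S)) (N := K) (i := e)
    (j := 0) fun n hn => by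
      rw [add_zero, show n + e = K + e + (n - K) by omega, pow_add, ← mul_assoc, h, ← pow_add,
        Nat.add_sub_cancel' hn]
  -- `x u * x v = x v` for `u < v`, since `w ^ k` lowers exponents `≥ K` of `b` by `k * e`
  let x : ℕ → WithOne S := fun m =>
    (gen b : WithOne S) ^ ((m + 1) * (K + 1) * e) * w ^ ((m + 1) * (K + 1))
  obtain ⟨u, v, huv, hblock⟩ := Set.finite_univ.exists_lt_map_eq_of_forall_mem
    (f := fun m => block gen (x m)) fun _ => Set.mem_univ _
  obtain ⟨j, rfl⟩ := Nat.exists_eq_add_of_lt huv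
  have hxv : x (u + j + 1) ≠ 1 := fun h1 =>
    coe_pow_ne_one (gen b) (by positivity) (WithOne.mul_eq_one_iff.mp h1).1
  have hK : K ≤ (j + 1) * (K + 1) * e :=
    (by nlinarith : K ≤ (j + 1) * (K + 1)).trans (Nat.le_mul_of_pos_right _ he)
  refine (hS.mul_ne_of_block_eq hxv hblock).1 ?_
  calc x u * x (u + j + 1)
      = (gen b : WithOne S) ^ ((u + 1) * (K + 1) * e) * (w ^ ((u + 1) * (K + 1)) *
          (gen b : WithOne S) ^ ((j + 1) * (K + 1) * e + (u + 1) * (K + 1) * e)) *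
          w ^ ((u + j + 1 + 1) * (K + 1)) := by
        simp only [x, mul_assoc]; ring_nf
    _ = x (u + j + 1) := by
        rw [hshift _ _ hK, mul_zero, add_zero, ← pow_add]
        simp only [x]; ring_nf

theorem le_of_pow_mul_eq_pow (hS : IsFreeMonogenicUnion gen) {w : WithOne S} {b : A}
    {L K : ℕ} (h : (gen b : WithOne S) ^ L * w = (gen b : WithOne S) ^ K) : L ≤ K := by
  by_contra! hKL
  obtain ⟨e, rfl⟩ : ∃ e, L = K + e := ⟨L - K, by omega⟩
  have he : 0 < e := by omega
  have hshift := pow_add_mul_mul_pow (x := w) (y := (gen b : WithOne S)) (N := K) (i := e)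
    (j := 0) fun n hn => by
      rw [add_zero, show n + e = n - K + (K + e) by omega, pow_add, mul_assoc, h, ← pow_add,
        Nat.sub_add_cancel hn]
  let x : ℕ → WithOne S := fun m =>
    w ^ ((m + 1) * (K + 1)) * (gen b : WithOne S) ^ ((m + 1) * (K + 1) * e)
  obtain ⟨u, v, huv, hblock⟩ := Set.finite_univ.exists_lt_map_eq_of_forall_mem
    (f := fun m => block gen (x m)) fun _ => Set.mem_univ _
  obtain ⟨j, rfl⟩ := Nat.exists_eq_add_of_lt huv
  have hxv : x (u + j + 1) ≠ 1 := fun h1 =>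
    coe_pow_ne_one (gen b) (by positivity) (WithOne.mul_eq_one_iff.mp h1).2
  have hK : K ≤ (j + 1) * (K + 1) * e :=
    (by nlinarith : K ≤ (j + 1) * (K + 1)).trans (Nat.le_mul_of_pos_right _ he)
  refine (hS.mul_ne_of_block_eq hxv hblock).2 ?_
  calc x (u + j + 1) * x u
      = w ^ ((u + j + 1 + 1) * (K + 1)) *
          ((gen b : WithOne S) ^ ((j + 1) * (K + 1) * e + (u + 1) * (K + 1) * e) *
          w ^ ((u + 1) * (K + 1))) * (gen b : WithOne S) ^ ((u + 1) * (K + 1) * e) := by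
        simp only [x, mul_assoc]; ring_nf
    _ = x (u + j + 1) := by
        rw [hshift _ _ hK, mul_zero, add_zero, mul_assoc, ← pow_add]
        simp only [x]; ring_nf

theorem block_mul_pow_repeat_propagates (hS : IsFreeMonogenicUnion gen) (y : WithOne S) (c : A)
    {V V' W : ℕ} (hVV' : V < V') (hVW : V ≤ W)
    (hV' : block gen (y * (gen c : WithOne S) ^ V') = block gen (y * (gen c : WithOne S) ^ V))
    (hW : block gen (y * (gen c : WithOne S) ^ W) = block gen (y * (gen c : WithOne S) ^ V)) :
    block gen (y * (gen c : WithOne S) ^ (W + (V' - V))) =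
      block gen (y * (gen c : WithOne S) ^ V) := by
  by_cases h1 : y * (gen c : WithOne S) ^ V = 1
  · obtain ⟨rfl, hV⟩ := WithOne.mul_eq_one_iff.mp h1
    have : V = 0 := by_contra fun hV0 => coe_pow_ne_one (gen c) (by omega) hV
    rw [h1, block_one, one_mul, hS.block_pow c (by omega)] at hV'
    exact absurd hV' (Option.some_ne_none c)
  obtain ⟨β, E, hE, hyV⟩ := hS.exists_eq_pow_of_ne_one h1
  rw [hyV, hS.block_pow β hE] at hV' hW ⊢
  obtain ⟨E', hE', hyV'⟩ := hS.block_eq_some_iff.mp hV'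
  obtain ⟨F, hF, hyW⟩ := hS.block_eq_some_iff.mp hW
  have hsplit : ∀ n, V ≤ n →
      y * (gen c : WithOne S) ^ n = (gen β : WithOne S) ^ E * (gen c : WithOne S) ^ (n - V) :=
    fun n hn => by rw [← hyV, mul_assoc, ← pow_add, Nat.add_sub_cancel' hn]
  have hEF : E ≤ F := hS.le_of_pow_mul_eq_pow ((hsplit W hVW).symm.trans hyW)
  refine hS.block_eq_some_iff.mpr ⟨F - E + E', by omega, ?_⟩
  calc y * (gen c : WithOne S) ^ (W + (V' - V))
      = (gen β : WithOne S) ^ (F - E) *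
          ((gen β : WithOne S) ^ E * (gen c : WithOne S) ^ (V' - V)) := by
        rw [pow_add, ← mul_assoc, hyW, ← mul_assoc, ← pow_add, Nat.sub_add_cancel hEF]
    _ = (gen β : WithOne S) ^ (F - E + E') := by rw [← hsplit V' hVV'.le, hyV', pow_add]

theorem exists_period_block_mul_pow (hS : IsFreeMonogenicUnion gen) (y : WithOne S) (c : A) :
    ∃ N T, 0 < T ∧ ∀ V ≥ N,
      block gen (y * (gen c : WithOne S) ^ (V + T)) = block gen (y * (gen c : WithOne S) ^ V) :=
  exists_period_of_repeats_propagate fun _ _ _ hVV' hVW hV' hW =>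
    hS.block_mul_pow_repeat_propagates y c hVV' hVW hV' hW

theorem exists_pow_mul_eq_or_growth (hS : IsFreeMonogenicUnion gen) (a : A) (z : WithOne S) :
    ∃ u s, 0 < s ∧ u + s ≤ Nat.card (Option A) + 1 ∧
      ((gen a : WithOne S) ^ (u + s) * z = (gen a : WithOne S) ^ u * z ∨
        ∃ β e δ, 0 < δ ∧ (gen a : WithOne S) ^ u * z = (gen β : WithOne S) ^ e ∧
          (gen a : WithOne S) ^ s * (gen β : WithOne S) ^ e = (gen β : WithOne S) ^ (e + δ)) := by
  obtain ⟨u, v, hu, huv, hv, hblock⟩ :=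
    exists_lt_le_add_card_map_eq (fun k => block gen ((gen a : WithOne S) ^ k * z)) 1
  have hne : (gen a : WithOne S) ^ u * z ≠ 1 := fun h =>
    coe_pow_ne_one (gen a) (by omega) (WithOne.mul_eq_one_iff.mp h).1
  obtain ⟨β, e, he, hzu⟩ := hS.exists_eq_pow_of_ne_one hne
  obtain ⟨e', he', hzv⟩ :=
    hS.block_eq_some_iff.mp (hblock.symm.trans (by rw [hzu, hS.block_pow β he]))
  have hrel : (gen a : WithOne S) ^ (v - u) * (gen β : WithOne S) ^ e =
      (gen β : WithOne S) ^ e' := by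
    rw [← hzu, ← mul_assoc, ← pow_add, Nat.sub_add_cancel huv.le, hzv]
  refine ⟨u, v - u, by omega, by omega, ?_⟩
  rcases (hS.le_of_mul_pow_eq_pow hrel).eq_or_lt with heq | hlt
  · left
    rw [Nat.add_sub_cancel' huv.le, hzv, hzu, heq]
  · right
    exact ⟨β, e, e' - e, by omega, hzu, by rw [hrel, Nat.add_sub_cancel' hlt.le]⟩

end IsFreeMonogenicUnion

variable {gen : A → S}

theorem block_pow_mul_pow_add_eq_of_growth {a β : A} {s e δ N T : ℕ} (hs : 0 < s)
    (hgrow : ∀ V ≥ e,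
      (gen a : WithOne S) ^ s * (gen β : WithOne S) ^ V = (gen β : WithOne S) ^ (V + δ))
    (hrow : ∀ j < s, ∀ V ≥ N,
      block gen ((gen a : WithOne S) ^ j * (gen β : WithOne S) ^ (V + T)) =
        block gen ((gen a : WithOne S) ^ j * (gen β : WithOne S) ^ V))
    (j : ℕ) : ∀ V ≥ max N e,
      block gen ((gen a : WithOne S) ^ j * (gen β : WithOne S) ^ (V + T)) =
        block gen ((gen a : WithOne S) ^ j * (gen β : WithOne S) ^ V) := by
  induction j using Nat.strong_induction_on with
  | _ j ih =>
    intro V hV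
    rcases lt_or_ge j s with hj | hj
    · exact hrow j hj V (le_of_max_le_left hV)
    · obtain ⟨i, rfl⟩ := Nat.exists_eq_add_of_le' hj
      rw [pow_add, mul_assoc, mul_assoc, hgrow V (le_of_max_le_right hV), hgrow _ (by omega),
        add_right_comm]
      exact ih i (by omega) (V + δ) (by omega)

theorem block_pow_add_mul_eq_of_growth {a β : A} {z : WithOne S} {u s e δ N T : ℕ}
    (hs : 0 < s) (hδ : 0 < δ) (hz : (gen a : WithOne S) ^ u * z = (gen β : WithOne S) ^ e)
    (hgrow : (gen a : WithOne S) ^ s * (gen β : WithOne S) ^ e = (gen β : WithOne S) ^ (e + δ))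
    (hrow : ∀ j < s, ∀ V ≥ N,
      block gen ((gen a : WithOne S) ^ j * (gen β : WithOne S) ^ (V + δ * T)) =
        block gen ((gen a : WithOne S) ^ j * (gen β : WithOne S) ^ V)) :
    ∀ m ≥ u + N * s, block gen ((gen a : WithOne S) ^ (m + s * T) * z) =
      block gen ((gen a : WithOne S) ^ m * z) := by
  have hiter := pow_mul_pow_add_mul (x := (gen a : WithOne S) ^ s) (y := (gen β : WithOne S))
    (N := e) (i := 0) (j := δ) fun n hn => by simpa using mul_pow_eq_pow_add_of_le hgrow hn
  have horbit : ∀ j k, (gen a : WithOne S) ^ (j + (s * k + u)) * z =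
      (gen a : WithOne S) ^ j * (gen β : WithOne S) ^ (e + k * δ) := fun j k => by
    rw [pow_add, pow_add, pow_mul, mul_assoc, mul_assoc, hz, ← hiter k e le_rfl, mul_zero,
      add_zero]
  intro m hm
  obtain ⟨j, rfl⟩ : ∃ j, m = j + (s * N + u) := ⟨m - (s * N + u), by rw [mul_comm] at hm; omega⟩
  rw [show j + (s * N + u) + s * T = j + (s * (N + T) + u) by ring, horbit, horbit,
    show e + (N + T) * δ = e + N * δ + δ * T by ring]
  exact block_pow_mul_pow_add_eq_of_growth hs (fun V hV => mul_pow_eq_pow_add_of_le hgrow hV)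
    hrow j _ (max_le (by nlinarith) (by omega))

namespace IsFreeMonogenicUnion

variable [Finite A]

open Nat in
theorem exists_period_block_pow_mul (hS : IsFreeMonogenicUnion gen) (a : A) :
    ∃ P D, 0 < D ∧ ∀ z : WithOne S, ∀ m ≥ P,
      block gen ((gen a : WithOne S) ^ (m + D) * z) = block gen ((gen a : WithOne S) ^ m * z) := by
  set B := Nat.card (Option A) + 1
  obtain ⟨N, T, hT, hrow⟩ := exists_common_period (ι := Fin B × A × Option A)
    (p := fun i V =>
      block gen ((gen a : WithOne S) ^ (i.1 : ℕ) * (gen i.2.1 : WithOne S) ^ V) = i.2.2)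
    fun i => by
      obtain ⟨N, T, hT, h⟩ := hS.exists_period_block_mul_pow ((gen a : WithOne S) ^ (i.1 : ℕ)) i.2.1
      exact ⟨N, T, hT, fun V hV hp => (h V hV).trans hp⟩
  -- each orbit has its own period `s * T` with `s ≤ B`, and `B !` is a common multiple
  refine ⟨(N + 1) * B, B ! * T, by positivity, fun z => ?_⟩
  suffices ∃ s, 0 < s ∧ s ≤ B ∧ ∀ m ≥ (N + 1) * B,
      block gen ((gen a : WithOne S) ^ (m + s * T) * z) =
        block gen ((gen a : WithOne S) ^ m * z) by
    obtain ⟨s, hs, hsB, h⟩ := this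
    obtain ⟨k, hk⟩ := Nat.dvd_factorial hs hsB
    rw [hk, mul_comm s, mul_assoc]
    exact eq_add_mul_of_eq_add (f := fun m => block gen ((gen a : WithOne S) ^ m * z)) h k
  obtain ⟨u, s, hs, hus, hcase⟩ := hS.exists_pow_mul_eq_or_growth a z
  refine ⟨s, hs, by omega, fun m hm => ?_⟩
  rcases hcase with hcycle | ⟨β, e, δ, hδ, hz, hgrow⟩
  · have hshift : ∀ n ≥ u, (gen a : WithOne S) ^ (n + s) * z = (gen a : WithOne S) ^ n * z := by
      intro n hn
      obtain ⟨i, rfl⟩ := Nat.exists_eq_add_of_le' hn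
      rw [add_assoc, pow_add, mul_assoc, hcycle, ← mul_assoc, ← pow_add]
    rw [mul_comm s T, eq_add_mul_of_eq_add (f := fun n => (gen a : WithOne S) ^ n * z) hshift T m
      ((Nat.le_mul_of_pos_left B N.succ_pos).trans' (by omega) |>.trans hm)]
  · have hsN : N * s ≤ N * B := Nat.mul_le_mul_left N (by omega)
    exact block_pow_add_mul_eq_of_growth hs hδ hz hgrow
      (fun j hj V hV => hrow (⟨j, by omega⟩, β, _) V hV δ rfl) m (by rw [add_one_mul] at hm; omega)

theorem finite_range_signature (hS : IsFreeMonogenicUnion gen) :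
    (Set.range (signature gen)).Finite := by
  have hblock : ∀ a, (Set.range fun k z => block gen ((gen a : WithOne S) ^ k * z)).Finite := by
    intro a
    obtain ⟨P, D, hD, h⟩ := hS.exists_period_block_pow_mul a
    exact finite_range_of_period hD fun m hm => funext (h · m hm)
  refine (Set.finite_iUnion hblock).subset ?_
  rintro _ ⟨x, rfl⟩
  obtain ⟨a, i, -, hx⟩ := hS.exists_eq_pow x
  exact Set.mem_iUnion.mpr ⟨a, i, funext fun z => by rw [signature, hx]⟩

end IsFreeMonogenicUnion

end FreeMonogenicUnion

theorem stmt13 {S : Type*} [Semigroup S] {A : Type*} [Finite A] (gen : A → S)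
    (hcover : ∀ x : S, ∃ a : A, x ∈ Nblock (gen a))
    (hfree : ∀ (a b : A) (i j : ℕ), 1 ≤ i → 1 ≤ j →
      spow (gen a) i = spow (gen b) j → a = b ∧ i = j) :
    {C : Set S | ∃ x : S, C = {y : S | rho gen x y}}.Finite := by
  have hS := IsFreeMonogenicUnion.of_spow hcover hfree
  refine (hS.finite_range_signature.image fun σ => {y | σ = signature gen y}).subset ?_
  rintro C ⟨x, rfl⟩
  exact ⟨signature gen x, ⟨x, rfl⟩, by ext y; simp [hS.rho_iff_signature_eq]⟩
end

section
/- Let S be a semigroup that is a finite disjoint union of free monogenic subsemigroups N_a = ⟨a⟩ (a ∈ A). Fix a ∈ A and x ∈ S, and suppose every set T(a,x,b) = { i : a^i·x ∈ N_b } that is infinite eventually agrees with an arithmetic progression with common difference q_b' = q(a,x,b). Then the sum over those b ∈ A with T(a,x,b) infinite of 1/q(a,x,b) equals 1. -/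
open scoped Classical

open Finset Filter

theorem Nat.card_filter_modEq_Ico_of_dvd {q Q : ℕ} (hq : 0 < q) (hQ : q ∣ Q) (n v : ℕ) :
    #{i ∈ Ico n (n + Q) | i ≡ v [MOD q]} = Q / q := by
  have hper : Function.Periodic (· ≡ v [MOD q]) Q := fun i => by
    simp [Nat.ModEq, Nat.add_mod, Nat.mod_eq_zero_of_dvd hQ]
  rw [Nat.filter_Ico_card_eq_of_periodic _ _ _ hper, Nat.count_modEq_card _ hq,
    Nat.mod_eq_zero_of_dvd hQ]
  simp

theorem sum_card_filter_mem_eq_card {α A : Type*} [Fintype A] (T : A → Set α) (s : Finset α)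
    (h : ∀ i ∈ s, ∃! b, i ∈ T b) : ∑ b, #{i ∈ s | i ∈ T b} = #s := by
  simp only [card_filter]
  rw [sum_comm, card_eq_sum_ones]
  refine sum_congr rfl fun i hi => ?_
  obtain ⟨b₀, hb₀, huniq⟩ := h i hi
  calc ∑ b, (if i ∈ T b then 1 else 0)
      = ∑ b, if b = b₀ then 1 else 0 :=
        sum_congr rfl fun b _ => if_congr ⟨huniq b, fun hb => hb ▸ hb₀⟩ rfl rfl
    _ = 1 := by simp

theorem card_filter_mem_Ico_of_eventually_modEq {T : Set ℕ} {q p Q : ℕ} (hq : 0 < q)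
    (hQ : q ∣ Q) (hT : ∀ i, p ≤ i → (i ∈ T ↔ i ≡ p [MOD q])) {M : ℕ} (hM : p ≤ M) :
    #{i ∈ Ico M (M + Q) | i ∈ T} = Q / q := by
  rw [← Nat.card_filter_modEq_Ico_of_dvd hq hQ M p]
  exact congrArg card <| filter_congr fun i hi => hT i (hM.trans (mem_Ico.1 hi).1)

theorem eventually_card_filter_mem_Ico_eq_zero {T : Set ℕ} (hT : T.Finite) :
    ∀ᶠ M in atTop, ∀ Q, #{i ∈ Ico M (M + Q) | i ∈ T} = 0 := by
  obtain ⟨m, hm⟩ := hT.bddAbove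
  filter_upwards [eventually_gt_atTop m] with M hM Q
  simp only [card_eq_zero, filter_eq_empty_iff, mem_Ico]
  exact fun i hi hiT => (hm hiT).not_gt (hM.trans_le hi.1)

theorem sum_inv_period_eq_one {A : Type*} [Fintype A] (T : A → Set ℕ) (q : A → ℕ) (N : ℕ)
    (hpart : ∀ i, N ≤ i → ∃! b, i ∈ T b)
    (hper : ∀ b, (T b).Infinite → 0 < q b ∧ ∃ p, ∀ i, p ≤ i → (i ∈ T b ↔ i ≡ p [MOD q b])) :
    ∑ b, (if (T b).Infinite then (1 : ℚ) / q b else 0) = 1 := by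
  set Q := ∏ b with (T b).Infinite, q b
  have hdvd : ∀ b, (T b).Infinite → q b ∣ Q := fun b hb =>
    dvd_prod_of_mem q (mem_filter.2 ⟨mem_univ b, hb⟩)
  have hQ : (Q : ℚ) ≠ 0 := by
    exact_mod_cast (prod_pos fun b hb => (hper b (mem_filter.1 hb).2).1).ne'
  have hwindow : ∀ b, ∀ᶠ M in atTop,
      #{i ∈ Ico M (M + Q) | i ∈ T b} = if (T b).Infinite then Q / q b else 0 := by
    intro b
    by_cases hb : (T b).Infinite
    · obtain ⟨hqb, p, hp⟩ := hper b hb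
      filter_upwards [eventually_ge_atTop p] with M hM
      rw [if_pos hb, card_filter_mem_Ico_of_eventually_modEq hqb (hdvd b hb) hp hM]
    · filter_upwards [eventually_card_filter_mem_Ico_eq_zero (Set.not_infinite.1 hb)] with M hM
      rw [if_neg hb, hM]
  obtain ⟨M, hMN, hM⟩ :=
    ((eventually_ge_atTop N).and (eventually_all.2 hwindow)).exists
  have hcount : ∑ b, (if (T b).Infinite then Q / q b else 0) = Q := by
    rw [← sum_congr rfl fun b _ => hM b, sum_card_filter_mem_eq_card T _
      fun i hi => hpart i (hMN.trans (mem_Ico.1 hi).1), Nat.card_Ico, Nat.add_sub_cancel_left]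
  have hterm : ∀ b, (if (T b).Infinite then (1 : ℚ) / q b else 0) =
      ((if (T b).Infinite then Q / q b else 0 : ℕ) : ℚ) / Q := by
    intro b
    split_ifs with hb
    · rw [Nat.cast_div (hdvd b hb) (by exact_mod_cast (hper b hb).1.ne'), div_div_cancel_left' hQ,
        one_div]
    · simp
  rw [sum_congr rfl fun b _ => hterm b, ← sum_div, ← Nat.cast_sum, hcount, div_self hQ]

theorem existsUnique_mem_Nblock {S : Type*} [Semigroup S] {A : Type*} {gen : A → S}
    (hcover : ∀ x : S, ∃ a : A, x ∈ Nblock (gen a))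
    (hfree : ∀ (a b : A) (i j : ℕ), 1 ≤ i → 1 ≤ j →
      spow (gen a) i = spow (gen b) j → a = b ∧ i = j) (y : S) :
    ∃! b, y ∈ Nblock (gen b) := by
  obtain ⟨b, hb⟩ := hcover y
  refine ⟨b, hb, fun c ⟨j, hj, hyj⟩ => ?_⟩
  obtain ⟨k, hk, hyk⟩ := hb
  exact (hfree c b j k hj hk (hyj.symm.trans hyk)).1

theorem stmt16 {S : Type*} [Semigroup S] {A : Type*} [Fintype A] (gen : A → S)
    (hcover : ∀ x : S, ∃ a : A, x ∈ Nblock (gen a))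
    (hfree : ∀ (a b : A) (i j : ℕ), 1 ≤ i → 1 ≤ j →
      spow (gen a) i = spow (gen b) j → a = b ∧ i = j)
    (a : A) (x : S) (Tnat : A → Set ℕ)
    (hT : ∀ b : A, Tnat b = {i : ℕ | 1 ≤ i ∧ spow (gen a) i * x ∈ Nblock (gen b)})
    (q : A → ℕ)
    (hq : ∀ b : A, (Tnat b).Infinite →
      1 ≤ q b ∧ ∃ p : ℕ, 1 ≤ p ∧ ∀ i : ℕ, p ≤ i → (i ∈ Tnat b ↔ i % q b = p % q b)) :
    ∑ b : A, (if (Tnat b).Infinite then (1 : ℚ) / (q b : ℚ) else 0) = 1 := by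
  have hpart : ∀ i, 1 ≤ i → ∃! b, i ∈ Tnat b := by
    intro i hi
    simpa only [hT, Set.mem_ofPred_eq, hi, true_and] using
      existsUnique_mem_Nblock hcover hfree (spow (gen a) i * x)
  exact sum_inv_period_eq_one Tnat q 1 hpart fun b hb =>
    ⟨(hq b hb).1, (hq b hb).2.imp fun _ hp => hp.2⟩
end
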